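/- arXiv:1803.08355 — 2 statements merged into one kernel-verified Lean document; each statement's English description precedes it below -/
import Mathlib

section
/- Let T be a rooted tree on nodes {0,…,d} with root 0, parent function p, and positive weights c_i. For legal assignments y, h ∈ {0,1}^d (meaning y_i ≤ y_{p(i)} for each non-root node, with y_0 = h_0 = 1 at the root), the H-loss Δ_H(h, y) = Σ_{i=1}^d c_i · 1_{h_i ≠ y_i} · 1_{h_{p(i)} = y_{p(i)}} satisfies Δ_H(h, y) = ⟨ψ_wa(y), C ψ_wa(h)⟩, where ψ_wa(z) = (z, Gz) with G the parent-adjacency matrix (so (Gz)_i = z_{p(i)}), and C is the block matrix [[−2 diag(c), diag(c)], [diag(c), 0]]. -/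
open Finset

theorem stmt2 (d : ℕ) (p : Fin (d+1) → Fin (d+1))
    (hp0 : p 0 = 0) (hp : ∀ i : Fin (d+1), i ≠ 0 → p i < i)
    (c : Fin (d+1) → ℝ) (hc : ∀ i, 0 < c i)
    (y h : Fin (d+1) → Bool)
    (hy0 : y 0 = true) (hh0 : h 0 = true)
    (hy : ∀ i, y i = true → y (p i) = true)
    (hh : ∀ i, h i = true → h (p i) = true)
    (b2r : Bool → ℝ) (hb : b2r = fun b => if b then 1 else 0)
    (ψwa : (Fin (d+1) → Bool) → (Fin (d+1) ⊕ Fin (d+1)) → ℝ)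
    (hψ : ∀ z, ψwa z = Sum.elim (fun i => b2r (z i)) (fun i => b2r (z (p i))))
    (C : Matrix (Fin (d+1) ⊕ Fin (d+1)) (Fin (d+1) ⊕ Fin (d+1)) ℝ)
    (hC : C = Matrix.fromBlocks ((-2 : ℝ) • Matrix.diagonal c) (Matrix.diagonal c)
        (Matrix.diagonal c) 0) :
    ∑ i ∈ Finset.univ.erase 0,
        c i * (if h i ≠ y i then (1:ℝ) else 0) * (if h (p i) = y (p i) then 1 else 0)
      = ∑ i, ψwa y i * (C.mulVec (ψwa h)) i := by
  subst hb hC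
  rw [hψ, hψ, Matrix.fromBlocks_mulVec, Fintype.sum_sum_type]
  simp only [Sum.elim_inl, Sum.elim_inr, Pi.add_apply, Matrix.smul_mulVec,
    Matrix.zero_mulVec, Pi.zero_apply, add_zero, Pi.smul_apply, Matrix.mulVec_diagonal,
    smul_eq_mul, Sum.elim_comp_inl, Sum.elim_comp_inr]
  rw [Finset.sum_erase_eq_sub (f := fun i => (c i * if h i ≠ y i then (1:ℝ) else 0) * if h (p i) = y (p i) then 1 else 0) (Finset.mem_univ 0)]
  rw [show ((c 0 * if h 0 ≠ y 0 then (1:ℝ) else 0) * if h (p 0) = y (p 0) then 1 else 0) = 0 by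
    simp [hy0, hh0]]
  rw [sub_zero]
  rw [← Finset.sum_add_distrib]
  apply Finset.sum_congr rfl
  intro i _
  rcases hyi : y i with _ | _ <;> rcases hhi : h i with _ | _ <;>
    [skip; (have := hh i hhi); (have := hy i hyi); (have h1 := hy i hyi; have h2 := hh i hhi)] <;>
    rcases hypi : y (p i) with _ | _ <;> rcases hhpi : h (p i) with _ | _ <;>
    simp_all <;> ring
end

section
/- Let ψ_wa: Y → ℝ^q and ψ_a: Y^{H,R} → ℝ^p be bounded maps, C: ℝ^p → ℝ^q a bounded linear operator, and (X,Y) ~ D a random pair with Y taking values in a finite set Y. Define g*(x) = E[ψ_wa(Y) | X = x]. For any measurable g: X → ℝ^q define the decoded predictor (h_g(x), r_g(x)) = argmin_{(y_h,y_r) ∈ Y^{H,R}} ⟨g(x), C ψ_a(y_h, y_r)⟩ and the risk R(h,r) = E_{(x,y)~D} ⟨ψ_wa(y), C ψ_a(h(x), r(x))⟩. Then for every measurable g, R(h_g, r_g) − R(h_{g*}, r_{g*}) ≤ 2 c_ℓ √(L(g) − L(g*)), where L(g) = E_{(x,y)~D} ‖ψ_wa(y) − g(x)‖² and c_ℓ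 = ‖C‖_op · max_{(y_h,y_r) ∈ Y^{H,R}} ‖ψ_a(y_h,y_r)‖. -/
/-! Writing `g*(x) = ∑ₛ P x s • ψwa s`, the pointwise excess risk is `⟪g* x, C ψa(h_g x) - C ψa(h_{g*} x)⟫`.
Since `h_g x` minimises against `g x`, replacing `g* x` by `g* x - g x` only increases it, so
Cauchy–Schwarz bounds it by `2 c_ℓ ‖g* x - g x‖`. The bias–variance decomposition identifies
`L g - L g*` with `∫ ‖g* - g‖²`, and Jensen's inequality `∫ f ≤ √(∫ f²)` finishes the proof. -/

open MeasureTheory Finset ProbabilityTheory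
open scoped RealInnerProductSpace

theorem integral_le_sqrt_integral_sq {X : Type*} [MeasurableSpace X] {μ : Measure X}
    [IsProbabilityMeasure μ] {f : X → ℝ} (hf : MemLp f 2 μ) :
    ∫ x, f x ∂μ ≤ √(∫ x, f x ^ 2 ∂μ) :=
  Real.le_sqrt_of_sq_le <| sub_nonneg.mp <| variance_eq_sub hf ▸ variance_nonneg f μ

section InnerProductSpace

variable {E : Type*} [NormedAddCommGroup E] [InnerProductSpace ℝ E]

theorem inner_sub_le_of_inner_le {u v a b : E} {c : ℝ} (hmin : ⟪v, a⟫ ≤ ⟪v, b⟫)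
    (ha : ‖a‖ ≤ c) (hb : ‖b‖ ≤ c) :
    ⟪u, a - b⟫ ≤ 2 * c * ‖u - v‖ := by
  have hv : ⟪v, a - b⟫ ≤ 0 := by rw [inner_sub_right]; linarith
  have hab : ‖a - b‖ ≤ 2 * c := by linarith [norm_sub_le a b]
  calc ⟪u, a - b⟫ = ⟪u - v, a - b⟫ + ⟪v, a - b⟫ := by rw [inner_sub_left]; ring
    _ ≤ ‖u - v‖ * ‖a - b‖ := by linarith [real_inner_le_norm (u - v) (a - b)]
    _ ≤ 2 * c * ‖u - v‖ := by rw [mul_comm]; gcongr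

theorem sum_mul_norm_sub_sq_eq_add_norm_mean_sub_sq {ι : Type*} (s : Finset ι) {w : ι → ℝ}
    (hw : ∑ i ∈ s, w i = 1) (z : ι → E) (v : E) :
    ∑ i ∈ s, w i * ‖z i - v‖ ^ 2 =
      ∑ i ∈ s, w i * ‖z i - ∑ j ∈ s, w j • z j‖ ^ 2 + ‖∑ j ∈ s, w j • z j - v‖ ^ 2 := by
  set m := ∑ j ∈ s, w j • z j
  have hcentered : ∑ i ∈ s, w i • (z i - m) = 0 := by
    simp only [smul_sub, sum_sub_distrib, ← sum_smul, hw, one_smul, m, sub_self]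
  have hcross : ∑ i ∈ s, w i * ⟪z i - m, m - v⟫ = 0 := by
    simp only [← real_inner_smul_left, ← sum_inner, hcentered, inner_zero_left]
  calc ∑ i ∈ s, w i * ‖z i - v‖ ^ 2
      = ∑ i ∈ s, (w i * ‖z i - m‖ ^ 2 + 2 * (w i * ⟪z i - m, m - v⟫) + w i * ‖m - v‖ ^ 2) := by
        refine sum_congr rfl fun i _ => ?_
        rw [← sub_add_sub_cancel (z i) m v, norm_add_sq_real]
        ring
    _ = ∑ i ∈ s, w i * ‖z i - m‖ ^ 2 + ‖m - v‖ ^ 2 := by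
        rw [sum_add_distrib, sum_add_distrib, ← mul_sum, hcross, ← sum_mul, hw]
        ring

end InnerProductSpace

theorem stmt3_general
    {X : Type*} [MeasurableSpace X] (μ : Measure X) [IsProbabilityMeasure μ]
    {S YHR : Type*} [Fintype S] [Fintype YHR] [Nonempty YHR]
    {p q : ℕ}
    (ψwa : S → EuclideanSpace ℝ (Fin q)) (ψa : YHR → EuclideanSpace ℝ (Fin p))
    (C : EuclideanSpace ℝ (Fin p) →L[ℝ] EuclideanSpace ℝ (Fin q))
    (P : X → S → ℝ) (hP1 : ∀ x, ∑ s, P x s = 1)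
    (g gs : X → EuclideanSpace ℝ (Fin q))
    (hgs : ∀ x, gs x = ∑ s, P x s • ψwa s)
    (decg decgs : X → YHR)
    (hdecg : ∀ x z, ⟪g x, C (ψa (decg x))⟫ ≤ ⟪g x, C (ψa z)⟫)
    (R : (X → YHR) → ℝ)
    (hR : ∀ f, R f = ∫ x, ∑ s, P x s * ⟪ψwa s, C (ψa (f x))⟫ ∂μ)
    (L : (X → EuclideanSpace ℝ (Fin q)) → ℝ)
    (hL : ∀ g', L g' = ∫ x, ∑ s, P x s * ‖ψwa s - g' x‖^2 ∂μ)
    (hint1 : Integrable (fun x => ∑ s, P x s * ⟪ψwa s, C (ψa (decg x))⟫) μ)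
    (hint2 : Integrable (fun x => ∑ s, P x s * ⟪ψwa s, C (ψa (decgs x))⟫) μ)
    (hint3 : Integrable (fun x => ∑ s, P x s * ‖ψwa s - g x‖^2) μ)
    (hint4 : Integrable (fun x => ∑ s, P x s * ‖ψwa s - gs x‖^2) μ)
    (cl : ℝ)
    (hcl : cl = ‖C‖ * (Finset.univ.sup' Finset.univ_nonempty fun z : YHR => ‖ψa z‖)) :
    R decg - R decgs ≤ 2 * cl * Real.sqrt (L g - L gs) := by
  have hrisk : ∀ x v, ∑ s, P x s * ⟪ψwa s, v⟫ = ⟪gs x, v⟫ := fun x v => by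
    simp only [hgs, sum_inner, real_inner_smul_left]
  have hbound : ∀ z, ‖C (ψa z)‖ ≤ cl := fun z =>
    hcl ▸ (C.le_opNorm _).trans (by gcongr; exact le_sup' (fun z => ‖ψa z‖) (mem_univ z))
  have hexcess : ∀ x, ∑ s, P x s * ⟪ψwa s, C (ψa (decg x))⟫ -
      ∑ s, P x s * ⟪ψwa s, C (ψa (decgs x))⟫ ≤ 2 * cl * ‖gs x - g x‖ := fun x => by
    rw [hrisk, hrisk, ← inner_sub_right]
    exact inner_sub_le_of_inner_le (hdecg x (decgs x)) (hbound _) (hbound _)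
  have hbias : ∀ x, ∑ s, P x s * ‖ψwa s - g x‖ ^ 2 - ∑ s, P x s * ‖ψwa s - gs x‖ ^ 2 =
      ‖gs x - g x‖ ^ 2 := fun x => by
    rw [sum_mul_norm_sub_sq_eq_add_norm_mean_sub_sq _ (hP1 x), ← hgs]
    ring
  have hsq : Integrable (fun x => ‖gs x - g x‖ ^ 2) μ :=
    (hint3.sub hint4).congr (ae_of_all _ hbias)
  have hmem : MemLp (fun x => ‖gs x - g x‖) 2 μ := by
    refine (memLp_two_iff_integrable_sq ?_).mpr hsq
    simpa only [Real.sqrt_sq (norm_nonneg _)] using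
      Real.continuous_sqrt.comp_aestronglyMeasurable hsq.aestronglyMeasurable
  have hcl0 : 0 ≤ cl := (norm_nonneg _).trans (hbound (Classical.arbitrary YHR))
  calc R decg - R decgs
      = ∫ x, (∑ s, P x s * ⟪ψwa s, C (ψa (decg x))⟫ -
          ∑ s, P x s * ⟪ψwa s, C (ψa (decgs x))⟫) ∂μ := by
        rw [hR, hR, integral_sub hint1 hint2]
    _ ≤ ∫ x, 2 * cl * ‖gs x - g x‖ ∂μ :=
        integral_mono (hint1.sub hint2) ((hmem.integrable one_le_two).const_mul _) hexcess
    _ ≤ 2 * cl * √(∫ x, ‖gs x - g x‖ ^ 2 ∂μ) := by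
        rw [integral_const_mul]
        gcongr
        exact integral_le_sqrt_integral_sq hmem
    _ = 2 * cl * √(L g - L gs) := by
        rw [hL, hL, ← integral_sub hint3 hint4, integral_congr_ae (ae_of_all _ hbias)]

theorem stmt3
    {X : Type*} [MeasurableSpace X] (μ : Measure X) [IsProbabilityMeasure μ]
    {S YHR : Type*} [Fintype S] [Fintype YHR] [Nonempty S] [Nonempty YHR]
    {p q : ℕ}
    (ψwa : S → EuclideanSpace ℝ (Fin q)) (ψa : YHR → EuclideanSpace ℝ (Fin p))
    (C : EuclideanSpace ℝ (Fin p) →L[ℝ] EuclideanSpace ℝ (Fin q))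
    (P : X → S → ℝ) (hP0 : ∀ x s, 0 ≤ P x s) (hP1 : ∀ x, ∑ s, P x s = 1)
    (g gs : X → EuclideanSpace ℝ (Fin q))
    (hgs : ∀ x, gs x = ∑ s, P x s • ψwa s)
    (decg decgs : X → YHR)
    (hdecg : ∀ x z, ⟪g x, C (ψa (decg x))⟫ ≤ ⟪g x, C (ψa z)⟫)
    (hdecgs : ∀ x z, ⟪gs x, C (ψa (decgs x))⟫ ≤ ⟪gs x, C (ψa z)⟫)
    (R : (X → YHR) → ℝ)
    (hR : ∀ f, R f = ∫ x, ∑ s, P x s * ⟪ψwa s, C (ψa (f x))⟫ ∂μ)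
    (L : (X → EuclideanSpace ℝ (Fin q)) → ℝ)
    (hL : ∀ g', L g' = ∫ x, ∑ s, P x s * ‖ψwa s - g' x‖^2 ∂μ)
    (hint1 : Integrable (fun x => ∑ s, P x s * ⟪ψwa s, C (ψa (decg x))⟫) μ)
    (hint2 : Integrable (fun x => ∑ s, P x s * ⟪ψwa s, C (ψa (decgs x))⟫) μ)
    (hint3 : Integrable (fun x => ∑ s, P x s * ‖ψwa s - g x‖^2) μ)
    (hint4 : Integrable (fun x => ∑ s, P x s * ‖ψwa s - gs x‖^2) μ)
    (cl : ℝ)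
    (hcl : cl = ‖C‖ * (Finset.univ.sup' Finset.univ_nonempty fun z : YHR => ‖ψa z‖)) :
    R decg - R decgs ≤ 2 * cl * Real.sqrt (L g - L gs) :=
  stmt3_general μ ψwa ψa C P hP1 g gs hgs decg decgs hdecg R hR L hL hint1 hint2 hint3 hint4 cl hcl
end
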